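/- arXiv:1510.07170 — 2 statements merged into one kernel-verified Lean document; each statement's English description precedes it below -/
import Mathlib

section
/- Let X ~ P_X on 𝒳 and S ~ θ on 𝒮 be independent, let W = S − X with pmf ξ, let Y be drawn given W according to the structured policy b with respect to (θ, ξ), and set S₂ = W + Y. Then for all y ∈ 𝒴 and s ∈ 𝒮, P(S₂ = s, Y = y) = P_X(y) θ(s). In particular Y has marginal pmf P_X, S₂ has marginal pmf θ, and S₂ is independent of Y. -/
open Finset
open scoped Classical

namespace SmartMeter

/-! ### Basic information measures for finitely supported distributions.
All entropies and mutual informations are in bits (base-2 logarithms). -/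

/-- Probability that the random variable `Z` takes the value `z` under the pmf `p`. -/
noncomputable def pr {Ω α : Type*} [Fintype Ω] [DecidableEq α]
    (p : Ω → ℝ) (Z : Ω → α) (z : α) : ℝ :=
  ∑ ω ∈ Finset.univ.filter (fun ω => Z ω = z), p ω

/-- Shannon entropy (in bits) of the random variable `Z` under the pmf `p`. -/
noncomputable def ent {Ω α : Type*} [Fintype Ω] [DecidableEq α]
    (p : Ω → ℝ) (Z : Ω → α) : ℝ :=
  -∑ z ∈ Finset.univ.image Z, pr p Z z * Real.logb 2 (pr p Z z)

/-- Mutual information `I(A; B)`. -/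
noncomputable def mutInfo {Ω α β : Type*} [Fintype Ω] [DecidableEq α] [DecidableEq β]
    (p : Ω → ℝ) (A : Ω → α) (B : Ω → β) : ℝ :=
  ent p A + ent p B - ent p (fun ω => (A ω, B ω))

/-- Conditional entropy `H(A | C)`. -/
noncomputable def condEnt {Ω α γ : Type*} [Fintype Ω] [DecidableEq α] [DecidableEq γ]
    (p : Ω → ℝ) (A : Ω → α) (C : Ω → γ) : ℝ :=
  ent p (fun ω => (A ω, C ω)) - ent p C

/-- Conditional mutual information `I(A; B | C)`. -/
noncomputable def condMutInfo {Ω α β γ : Type*} [Fintype Ω] [DecidableEq α] [DecidableEq β]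
    [DecidableEq γ] (p : Ω → ℝ) (A : Ω → α) (B : Ω → β) (C : Ω → γ) : ℝ :=
  ent p (fun ω => (A ω, C ω)) + ent p (fun ω => (B ω, C ω))
    - ent p (fun ω => (A ω, B ω, C ω)) - ent p C

/-- `p` is a probability mass function on the finite type `Ω`. -/
def IsPMF {Ω : Type*} [Fintype Ω] (p : Ω → ℝ) : Prop :=
  (∀ ω, 0 ≤ p ω) ∧ ∑ ω, p ω = 1

/-- Extension of a pmf on `{0, …, n}` to an integer-indexed function (zero out of range). -/
noncomputable def extZ {n : ℕ} (f : Fin (n + 1) → ℝ) (k : ℤ) : ℝ :=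
  if h : 0 ≤ k ∧ k ≤ (n : ℤ) then f ⟨k.toNat, by omega⟩ else 0

/-! ### The single-letter quantity `J*` -/

/-- `I(S - X; X)` for independent `X ~ PX` on `{0,…,mx}` and `S ~ θ` on `{0,…,ms}`. -/
noncomputable def iidMI (mx ms : ℕ) (PX : Fin (mx + 1) → ℝ) (θ : Fin (ms + 1) → ℝ) : ℝ :=
  mutInfo (fun ω : Fin (mx + 1) × Fin (ms + 1) => PX ω.1 * θ ω.2)
    (fun ω => ((ω.2 : ℕ) : ℤ) - ((ω.1 : ℕ) : ℤ)) (fun ω => ω.1)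

/-- `J* = min over pmfs θ on 𝒮 of I(S - X; X)`. -/
noncomputable def Jstar (mx ms : ℕ) (PX : Fin (mx + 1) → ℝ) : ℝ :=
  sInf {r : ℝ | ∃ θ : Fin (ms + 1) → ℝ, IsPMF θ ∧ iidMI mx ms PX θ = r}

/-! ### The structured policy `b*` -/

/-- `ξ(w) = Σ_{(x,s) : s - x = w} PX(x) θ(s)`, the pmf of `W = S - X`. -/
noncomputable def xiOf (mx ms : ℕ) (PX : Fin (mx + 1) → ℝ) (θ : Fin (ms + 1) → ℝ)
    (w : ℤ) : ℝ :=
  ∑ x : Fin (mx + 1), ∑ s : Fin (ms + 1),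
    if ((s : ℕ) : ℤ) - ((x : ℕ) : ℤ) = w then PX x * θ s else 0

/-- The structured policy with respect to `(θ, ξ)`:
`b(y|w) = PX(y) θ(y + w) / ξ(w)` for `y ∈ 𝒳 ∩ 𝒴₀(w)` (when `ξ(w) > 0`), else `0`. -/
noncomputable def bstar (mx my ms : ℕ) (PX : Fin (mx + 1) → ℝ) (θ : Fin (ms + 1) → ℝ)
    (w : ℤ) (y : Fin (my + 1)) : ℝ :=
  if xiOf mx ms PX θ w = 0 then 0
  else extZ PX ((y : ℕ) : ℤ) * extZ θ (((y : ℕ) : ℤ) + w) / xiOf mx ms PX θ w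

/-! ### Trajectory spaces, policies and induced joint laws.
Time is indexed from `0`; `ω = (s₁, x, y)` records the initial battery state `S₁ = ω.1`,
the demands `X_{t+1} = ω.2.1 t` and the outputs `Y_{t+1} = ω.2.2 t` for `t = 0, …, T-1`. -/

/-- Trajectories of horizon `T`. -/
abbrev Traj (mx my ms T : ℕ) :=
  Fin (ms + 1) × (Fin T → Fin (mx + 1)) × (Fin T → Fin (my + 1))

variable {mx my ms T : ℕ}

/-- Demand at (0-based) time `t`, as an integer (junk value `0` for `t ≥ T`). -/
def Xat (ω : Traj mx my ms T) (t : ℕ) : ℤ :=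
  if h : t < T then ((ω.2.1 ⟨t, h⟩ : ℕ) : ℤ) else 0

/-- Output at (0-based) time `t`, as an integer (junk value `0` for `t ≥ T`). -/
def Yat (ω : Traj mx my ms T) (t : ℕ) : ℤ :=
  if h : t < T then ((ω.2.2 ⟨t, h⟩ : ℕ) : ℤ) else 0

/-- Battery state at (0-based) time `t`: `S_{t+1} = S_t + Y_t - X_t`, `Sat ω 0 = S₁`. -/
def Sat (ω : Traj mx my ms T) (t : ℕ) : ℤ :=
  ((ω.1 : ℕ) : ℤ) + ∑ i ∈ Finset.range t, (Yat ω i - Xat ω i)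

/-- `W_t = S_t - X_t`. -/
def Wat (ω : Traj mx my ms T) (t : ℕ) : ℤ := Sat ω t - Xat ω t

/-- A general causal (class `Q_A`) randomized battery policy:
`q_t(y_t | x^t, s^t, y^{t-1})`; since `s^t` is determined by `(s₁, x^{t-1}, y^{t-1})`,
the policy is a function of `(x^t, s₁, y^{t-1})`. -/
def PolicyA (mx my ms : ℕ) : Type :=
  (t : ℕ) → (Fin (t + 1) → Fin (mx + 1)) → Fin (ms + 1) → (Fin t → Fin (my + 1)) →
    Fin (my + 1) → ℝ

/-- A class-`Q_B` policy: `q_t(y_t | x_t, s_t, y^{t-1})`. -/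
def PolicyB (mx my ms : ℕ) : Type :=
  (t : ℕ) → Fin (mx + 1) → ℤ → (Fin t → Fin (my + 1)) → Fin (my + 1) → ℝ

/-- The battery state `S_t` computed from `s₁` and the history `(x^t, y^{t-1})`. -/
def hstate {t : ℕ} (s1 : Fin (ms + 1)) (x : Fin (t + 1) → Fin (mx + 1))
    (y : Fin t → Fin (my + 1)) : ℤ :=
  ((s1 : ℕ) : ℤ) + ∑ i : Fin t, (((y i : ℕ) : ℤ) - ((x i.castSucc : ℕ) : ℤ))

/-- Each `q_t(· | x^t, s^t, y^{t-1})` is a pmf on `𝒴`. -/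
def CondPMFA (q : PolicyA mx my ms) : Prop :=
  ∀ (t : ℕ) (x : Fin (t + 1) → Fin (mx + 1)) (s1 : Fin (ms + 1)) (y : Fin t → Fin (my + 1)),
    (∀ yt, 0 ≤ q t x s1 y yt) ∧ ∑ yt, q t x s1 y yt = 1

/-- Feasibility of a class-`Q_A` policy: conditional pmfs supported on
`𝒴₀(s_t - x_t) = {y ∈ 𝒴 : s_t - x_t + y ∈ 𝒮}`. -/
def FeasibleA (q : PolicyA mx my ms) : Prop :=
  CondPMFA q ∧
  ∀ (t : ℕ) (x : Fin (t + 1) → Fin (mx + 1)) (s1 : Fin (ms + 1)) (y : Fin t → Fin (my + 1)),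
    ∀ yt, q t x s1 y yt ≠ 0 →
      0 ≤ hstate s1 x y - ((x (Fin.last t) : ℕ) : ℤ) + ((yt : ℕ) : ℤ) ∧
      hstate s1 x y - ((x (Fin.last t) : ℕ) : ℤ) + ((yt : ℕ) : ℤ) ≤ (ms : ℤ)

/-- Each `q_t(· | x_t, s_t, y^{t-1})` is a pmf on `𝒴`. -/
def CondPMFB (q : PolicyB mx my ms) : Prop :=
  ∀ (t : ℕ) (xt : Fin (mx + 1)) (s : ℤ) (y : Fin t → Fin (my + 1)),
    (∀ yt, 0 ≤ q t xt s y yt) ∧ ∑ yt, q t xt s y yt = 1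

/-- Feasibility of a class-`Q_B` policy. -/
def FeasibleB (q : PolicyB mx my ms) : Prop :=
  CondPMFB q ∧
  ∀ (t : ℕ) (xt : Fin (mx + 1)) (s : ℤ) (y : Fin t → Fin (my + 1)),
    0 ≤ s → s ≤ (ms : ℤ) →
    ∀ yt, q t xt s y yt ≠ 0 →
      0 ≤ s - ((xt : ℕ) : ℤ) + ((yt : ℕ) : ℤ) ∧
      s - ((xt : ℕ) : ℤ) + ((yt : ℕ) : ℤ) ≤ (ms : ℤ)

/-- The demand prefix `x^t = (x_0, …, x_t)` of a trajectory. -/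
def prefX (ω : Traj mx my ms T) (t : Fin T) : Fin ((t : ℕ) + 1) → Fin (mx + 1) :=
  fun i => ω.2.1 ⟨(i : ℕ), lt_of_le_of_lt (Nat.lt_succ_iff.mp i.isLt) t.isLt⟩

/-- The output prefix `y^{t-1} = (y_0, …, y_{t-1})` of a trajectory. -/
def prefY (ω : Traj mx my ms T) (t : Fin T) : Fin (t : ℕ) → Fin (my + 1) :=
  fun i => ω.2.2 ⟨(i : ℕ), i.isLt.trans t.isLt⟩

/-- Joint law on trajectories induced by i.i.d. demand `PX`, initial battery pmf `PS1`
(independent of the demand), and a class-`Q_A` policy `q`. -/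
noncomputable def jointA (PS1 : Fin (ms + 1) → ℝ) (PX : Fin (mx + 1) → ℝ)
    (q : PolicyA mx my ms) (T : ℕ) (ω : Traj mx my ms T) : ℝ :=
  PS1 ω.1 * ∏ t : Fin T,
    (PX (ω.2.1 t) * q (t : ℕ) (prefX ω t) ω.1 (prefY ω t) (ω.2.2 t))

/-- Weight of a demand trajectory under a Markov chain `(PX1, Qm)`. -/
noncomputable def markovWt (PX1 : Fin (mx + 1) → ℝ) (Qm : Fin (mx + 1) → Fin (mx + 1) → ℝ)
    {T : ℕ} (x : Fin T → Fin (mx + 1)) : ℝ :=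
  ∏ t : Fin T,
    if _h : (t : ℕ) = 0 then PX1 (x t)
    else Qm (x ⟨(t : ℕ) - 1, lt_of_le_of_lt (Nat.sub_le _ _) t.isLt⟩) (x t)

/-- Joint law on trajectories induced by Markov demand and a class-`Q_A` policy. -/
noncomputable def jointAMarkov (PS1 : Fin (ms + 1) → ℝ) (PX1 : Fin (mx + 1) → ℝ)
    (Qm : Fin (mx + 1) → Fin (mx + 1) → ℝ) (q : PolicyA mx my ms) (T : ℕ)
    (ω : Traj mx my ms T) : ℝ :=
  PS1 ω.1 * markovWt PX1 Qm ω.2.1 *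
    ∏ t : Fin T, q (t : ℕ) (prefX ω t) ω.1 (prefY ω t) (ω.2.2 t)

/-- Joint law on trajectories induced by Markov demand and a class-`Q_B` policy. -/
noncomputable def jointBMarkov (PS1 : Fin (ms + 1) → ℝ) (PX1 : Fin (mx + 1) → ℝ)
    (Qm : Fin (mx + 1) → Fin (mx + 1) → ℝ) (q : PolicyB mx my ms) (T : ℕ)
    (ω : Traj mx my ms T) : ℝ :=
  PS1 ω.1 * markovWt PX1 Qm ω.2.1 *
    ∏ t : Fin T, q (t : ℕ) (ω.2.1 t) (Sat ω (t : ℕ)) (prefY ω t) (ω.2.2 t)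

/-- The memoryless time-invariant policy `q_t(y | x, s) = b*(y | s - x)`, as a member of the
class of general causal policies. -/
noncomputable def structuredPolicyA (mx my ms : ℕ) (PX : Fin (mx + 1) → ℝ)
    (θ : Fin (ms + 1) → ℝ) : PolicyA mx my ms :=
  fun t x s1 y yt => bstar mx my ms PX θ (hstate s1 x y - ((x (Fin.last t) : ℕ) : ℤ)) yt

/-!
Given `W = S - X = w`, the structured policy outputs `y` with probability
`PX(y) θ(y + w) / ξ(w)`, and `W` has law `ξ`, so `P(W = w, Y = y) = PX(y) θ(y + w)`.
Since `S₂ = W + Y`, putting `w = s - y` gives `P(S₂ = s, Y = y) = PX(y) θ(s)`: the joint law is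
the product of `PX` (extended by zero from `𝒳` to `𝒴`) and `θ`, whose marginals are therefore
`PX` and `θ`.
-/

section Marginals

variable {Ω α β : Type*} [Fintype Ω] [DecidableEq α] [DecidableEq β]

theorem pr_fst_eq_sum (p : Ω → ℝ) (A : Ω → α) (B : Ω → β) {t : Finset β}
    (hB : ∀ ω, B ω ∈ t) (a : α) :
    pr p A a = ∑ b ∈ t, pr p (fun ω => (A ω, B ω)) (a, b) := by
  simp only [pr, Prod.mk.injEq]
  rw [← Finset.sum_fiberwise_of_maps_to (g := B) (t := t) (fun ω _ => hB ω)]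
  simp only [Finset.filter_filter]

theorem pr_snd_eq_sum (p : Ω → ℝ) (A : Ω → α) (B : Ω → β) {t : Finset α}
    (hA : ∀ ω, A ω ∈ t) (b : β) :
    pr p B b = ∑ a ∈ t, pr p (fun ω => (A ω, B ω)) (a, b) := by
  simp only [pr, Prod.mk.injEq]
  rw [← Finset.sum_fiberwise_of_maps_to (g := A) (t := t) (fun ω _ => hA ω)]
  simp only [Finset.filter_filter, and_comm]

theorem pr_fst_eq_of_pr_eq_mul [Fintype β] {p : Ω → ℝ} {A : Ω → α} {B : Ω → β}
    {g : β → ℝ} {k : α → ℝ} (hg : ∑ b, g b = 1)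
    (h : ∀ a b, pr p (fun ω => (A ω, B ω)) (a, b) = g b * k a) (a : α) :
    pr p A a = k a := by
  rw [pr_fst_eq_sum p A B (fun ω => Finset.mem_univ (B ω)) a]
  simp only [h, ← Finset.sum_mul, hg, one_mul]

theorem pr_snd_eq_of_pr_eq_mul {p : Ω → ℝ} {A : Ω → α} {B : Ω → β}
    {g : β → ℝ} {k : α → ℝ} {s : Finset α} (hk : ∑ a ∈ s, k a = 1) (hks : ∀ a ∉ s, k a = 0)
    (h : ∀ a b, pr p (fun ω => (A ω, B ω)) (a, b) = g b * k a) (b : β) :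
    pr p B b = g b := by
  have hA : ∀ ω, A ω ∈ Finset.univ.image A ∪ s := fun ω =>
    Finset.mem_union_left _ (Finset.mem_image_of_mem A (Finset.mem_univ ω))
  have hk' : ∑ a ∈ Finset.univ.image A ∪ s, k a = 1 := by
    rw [← hk]
    exact (Finset.sum_subset Finset.subset_union_right fun a _ ha => hks a ha).symm
  rw [pr_snd_eq_sum p A B hA b]
  simp only [h, ← Finset.mul_sum, hk', mul_one]

end Marginals

section ExtZ

variable {n : ℕ}

theorem extZ_natCast (f : Fin (n + 1) → ℝ) (i : Fin (n + 1)) : extZ f ((i : ℕ) : ℤ) = f i := by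
  rw [extZ, dif_pos ⟨by omega, by omega⟩]
  congr

theorem extZ_of_notMem (f : Fin (n + 1) → ℝ) {k : ℤ} (hk : k ∉ Finset.Icc 0 (n : ℤ)) :
    extZ f k = 0 := by
  rw [Finset.mem_Icc] at hk
  exact dif_neg hk

theorem extZ_nonneg {f : Fin (n + 1) → ℝ} (hf : ∀ i, 0 ≤ f i) (k : ℤ) : 0 ≤ extZ f k := by
  unfold extZ
  split_ifs
  exacts [hf _, le_rfl]

theorem sum_Icc_eq_sum_fin {M : Type*} [AddCommMonoid M] (g : ℤ → M) :
    ∑ k ∈ Finset.Icc 0 (n : ℤ), g k = ∑ i : Fin (n + 1), g ((i : ℕ) : ℤ) := by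
  symm
  refine Finset.sum_bij' (fun i _ => ((i : ℕ) : ℤ))
    (fun k hk => ⟨k.toNat, by rw [Finset.mem_Icc] at hk; omega⟩) ?_ ?_ ?_ ?_ ?_
  · exact fun i _ => Finset.mem_Icc.mpr ⟨by omega, by omega⟩
  · exact fun k _ => Finset.mem_univ _
  · exact fun i _ => Fin.ext (by simp)
  · intro k hk
    rw [Finset.mem_Icc] at hk
    simp only
    omega
  · exact fun i _ => rfl

theorem sum_extZ_of_Icc_subset (f : Fin (n + 1) → ℝ) {t : Finset ℤ}
    (ht : Finset.Icc 0 (n : ℤ) ⊆ t) : ∑ k ∈ t, extZ f k = ∑ i, f i := by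
  rw [← Finset.sum_subset ht fun k _ hk => extZ_of_notMem f hk, sum_Icc_eq_sum_fin]
  simp only [extZ_natCast]

theorem sum_extZ_fin_of_le (f : Fin (n + 1) → ℝ) {m : ℕ} (h : n ≤ m) :
    ∑ j : Fin (m + 1), extZ f ((j : ℕ) : ℤ) = ∑ i, f i := by
  rw [← sum_Icc_eq_sum_fin]
  exact sum_extZ_of_Icc_subset f (Finset.Icc_subset_Icc le_rfl (by exact_mod_cast h))

theorem extZ_eq_sum_ite (f : Fin (n + 1) → ℝ) (k : ℤ) :
    extZ f k = ∑ i : Fin (n + 1), if ((i : ℕ) : ℤ) = k then f i else 0 := by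
  by_cases hk : k ∈ Finset.Icc 0 (n : ℤ)
  · rw [Finset.mem_Icc] at hk
    lift k to ℕ using hk.1
    have hkn : k < n + 1 := by omega
    rw [Finset.sum_eq_single ⟨k, hkn⟩ (fun i _ hi => if_neg (by simpa [Fin.ext_iff] using hi))
      (by simp), if_pos rfl, ← extZ_natCast f ⟨k, hkn⟩]
  · rw [extZ_of_notMem f hk]
    refine (Finset.sum_eq_zero fun i _ => if_neg ?_).symm
    rintro rfl
    exact hk (Finset.mem_Icc.mpr ⟨by omega, by omega⟩)

end ExtZ

section StructuredPolicy

variable (mx my ms : ℕ) (PX : Fin (mx + 1) → ℝ) (θ : Fin (ms + 1) → ℝ)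

theorem xiOf_eq_sum (w : ℤ) : xiOf mx ms PX θ w = ∑ x, PX x * extZ θ ((x : ℕ) + w) := by
  simp only [xiOf, extZ_eq_sum_ite, Finset.mul_sum, mul_ite, mul_zero, sub_eq_iff_eq_add']

/-- At `ξ(w) = 0`, where `b*(· | w)` is `0` by convention, this holds because every summand
`PX x θ(x + w)` of `ξ(w)` then vanishes. -/
theorem xiOf_mul_bstar {PX θ} (hPX : ∀ x, 0 ≤ PX x) (hθ : ∀ s, 0 ≤ θ s) (w : ℤ)
    (y : Fin (my + 1)) :
    xiOf mx ms PX θ w * bstar mx my ms PX θ w y = extZ PX (y : ℕ) * extZ θ ((y : ℕ) + w) := by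
  unfold bstar
  split_ifs with hξ
  · rw [mul_zero]
    rw [xiOf_eq_sum] at hξ
    have hterm := (Finset.sum_eq_zero_iff_of_nonneg fun x _ =>
      mul_nonneg (hPX x) (extZ_nonneg hθ _)).mp hξ
    by_cases hy : (y : ℕ) < mx + 1
    · rw [show extZ PX (y : ℕ) = PX ⟨y, hy⟩ from extZ_natCast PX ⟨y, hy⟩]
      exact (hterm ⟨y, hy⟩ (Finset.mem_univ _)).symm
    · rw [extZ_of_notMem PX (by rw [Finset.mem_Icc]; omega), zero_mul]
  · field_simp

/-- The law of `ω = (X, S, Y)`; `nextState ω` is `S₂ = S - X + Y`. -/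
noncomputable def policyLaw : Fin (mx + 1) × Fin (ms + 1) × Fin (my + 1) → ℝ :=
  fun ω => PX ω.1 * θ ω.2.1 * bstar mx my ms PX θ (((ω.2.1 : ℕ) : ℤ) - ((ω.1 : ℕ) : ℤ)) ω.2.2

def nextState (ω : Fin (mx + 1) × Fin (ms + 1) × Fin (my + 1)) : ℤ :=
  ((ω.2.1 : ℕ) : ℤ) - ((ω.1 : ℕ) : ℤ) + ((ω.2.2 : ℕ) : ℤ)

theorem pr_policyLaw_eq_xiOf_mul_bstar (z : ℤ) (y : Fin (my + 1)) :
    pr (policyLaw mx my ms PX θ) (fun ω => (nextState mx my ms ω, ω.2.2)) (z, y) =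
      xiOf mx ms PX θ (z - (y : ℕ)) * bstar mx my ms PX θ (z - (y : ℕ)) y := by
  have hfiber : ∀ ω, (nextState mx my ms ω, ω.2.2) = (z, y) ↔
      ω.2.2 = y ∧ ((ω.2.1 : ℕ) : ℤ) - ((ω.1 : ℕ) : ℤ) = z - (y : ℕ) := by
    rintro ⟨x, s, y'⟩
    simp only [nextState, Prod.mk.injEq]
    constructor
    · rintro ⟨hz, rfl⟩
      exact ⟨rfl, by omega⟩
    · rintro ⟨rfl, hw⟩
      exact ⟨by omega, rfl⟩
  simp only [pr, hfiber, Finset.sum_filter, Fintype.sum_prod_type, ite_and, Finset.sum_ite_eq',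
    Finset.mem_univ, if_true, xiOf, Finset.sum_mul, ite_mul, zero_mul]
  refine Finset.sum_congr rfl fun x _ => Finset.sum_congr rfl fun s _ => ?_
  split_ifs with hw
  · rw [policyLaw, hw]
  · rfl

theorem pr_policyLaw_nextState_output {PX θ} (hPX : ∀ x, 0 ≤ PX x) (hθ : ∀ s, 0 ≤ θ s)
    (z : ℤ) (y : Fin (my + 1)) :
    pr (policyLaw mx my ms PX θ) (fun ω => (nextState mx my ms ω, ω.2.2)) (z, y) =
      extZ PX (y : ℕ) * extZ θ z := by
  rw [pr_policyLaw_eq_xiOf_mul_bstar, xiOf_mul_bstar mx my ms hPX hθ, add_sub_cancel]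

end StructuredPolicy

/-- Under the structured policy `b*` w.r.t. `(θ, ξ)`, with `X ~ PX` and
`S ~ θ` independent, `W = S - X`, `Y | W ~ b*(· | W)` and `S₂ = W + Y`:
`P(S₂ = s, Y = y) = PX(y) θ(s)` for all `y ∈ 𝒴`, `s ∈ 𝒮`; in particular `Y ~ PX`,
`S₂ ~ θ`, and `S₂ ⊥ Y`. -/
theorem structured_policy_invariance (mx my ms : ℕ) (hxy : mx ≤ my)
    (PX : Fin (mx + 1) → ℝ) (hPX : IsPMF PX)
    (θ : Fin (ms + 1) → ℝ) (hθ : IsPMF θ) :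
    let p : Fin (mx + 1) × Fin (ms + 1) × Fin (my + 1) → ℝ :=
      fun ω => PX ω.1 * θ ω.2.1 *
        bstar mx my ms PX θ (((ω.2.1 : ℕ) : ℤ) - ((ω.1 : ℕ) : ℤ)) ω.2.2
    let S2 : Fin (mx + 1) × Fin (ms + 1) × Fin (my + 1) → ℤ :=
      fun ω => ((ω.2.1 : ℕ) : ℤ) - ((ω.1 : ℕ) : ℤ) + ((ω.2.2 : ℕ) : ℤ)
    let Yv : Fin (mx + 1) × Fin (ms + 1) × Fin (my + 1) → Fin (my + 1) := fun ω => ω.2.2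
    (∀ (y : Fin (my + 1)) (s : Fin (ms + 1)),
        pr p (fun ω => (S2 ω, Yv ω)) (((s : ℕ) : ℤ), y) = extZ PX ((y : ℕ) : ℤ) * θ s) ∧
    (∀ y : Fin (my + 1), pr p Yv y = extZ PX ((y : ℕ) : ℤ)) ∧
    (∀ s : Fin (ms + 1), pr p S2 ((s : ℕ) : ℤ) = θ s) ∧
    (∀ (z : ℤ) (y : Fin (my + 1)),
        pr p (fun ω => (S2 ω, Yv ω)) (z, y) = pr p S2 z * pr p Yv y) := by
  intro p S2 Yv
  have joint : ∀ z y, pr p (fun ω => (S2 ω, Yv ω)) (z, y) = extZ PX ((y : ℕ) : ℤ) * extZ θ z :=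
    pr_policyLaw_nextState_output mx my ms hPX.1 hθ.1
  have margS : ∀ z, pr p S2 z = extZ θ z :=
    pr_fst_eq_of_pr_eq_mul ((sum_extZ_fin_of_le PX hxy).trans hPX.2) joint
  have margY : ∀ y, pr p Yv y = extZ PX ((y : ℕ) : ℤ) :=
    pr_snd_eq_of_pr_eq_mul ((sum_extZ_of_Icc_subset θ subset_rfl).trans hθ.2)
      (fun z hz => extZ_of_notMem θ hz) joint
  refine ⟨fun y s => ?_, margY, fun s => ?_, fun z y => ?_⟩
  · rw [joint, extZ_natCast]
  · rw [margS, extZ_natCast]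
  · rw [joint, margS, margY, mul_comm]

end SmartMeter
end

section
/- Let P_X be a pmf on 𝒳 = {0,…,m_x} with full support that is symmetric, i.e., P_X(x) = P_X(m_x − x) for all x ∈ 𝒳. Then the minimizer θ* of θ ↦ I(S − X; X) (with X ~ P_X and S ~ θ independent) over pmfs θ on 𝒮 = {0,…,m_s} is symmetric: θ*(s) = θ*(m_s − s) for all s ∈ 𝒮. -/
open Finset
open scoped Classical

namespace SmartMeter

variable {mx my ms T : ℕ}

/-!
Writing `ξ` for the law of `W = S - X`, one has `I(S - X; X) = H(W) - H(S)`, and in Kullback–Leibler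
form `∑ P_X(x) θ(s) log (θ(s) / ξ(s - x))`; by the log-sum inequality this is convex in `θ`,
strictly along the segment between two fully supported pmfs `θ₀`, `θ₁` unless
`θ₀(s) ξ₁(s - x) = θ₁(s) ξ₀(s - x)` for all `x, s`. Taking `x = 0` and `x = 1` shows that
`θ₁ / θ₀` is then constant, so two fully supported minimizers coincide. Minimizers are fully
supported: if `θ(s) = 0` next to a point of the support, moving mass `ε` to `s` raises `H(S)` by
`ε log (1/ε) + O(ε)` but `H(W)` by only `c ε log (1/ε) + O(ε)` with `c < 1`, because part of the
new mass of `W` lands where `ξ` is already positive. Finally, for symmetric `P_X` the reflection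
`θ ↦ θ(m_s - ·)` reflects `ξ` and so preserves `H(W) - H(S)`; it maps the minimizer to a minimizer,
hence to itself.
-/

open Real

lemma Fin.forall_of_castSucc_iff_succ {n : ℕ} {P : Fin (n + 1) → Prop}
    (h : ∀ i : Fin n, P i.castSucc ↔ P i.succ) {j : Fin (n + 1)} (hj : P j) (i : Fin (n + 1)) :
    P i := by
  have hP₀ : ∀ i, P i ↔ P 0 := fun i => Fin.induction Iff.rfl (fun i ih => (h i).symm.trans ih) i
  exact (hP₀ i).2 ((hP₀ j).1 hj)

lemma Fin.eq_of_mul_succ_eq {n : ℕ} {a b : Fin (n + 1) → ℝ} (hb : ∀ i, 0 < b i)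
    (h : ∀ i : Fin n, a i.succ * b i.castSucc = a i.castSucc * b i.succ)
    (hsum : ∑ i, a i = ∑ i, b i) : a = b := by
  have hprop : ∀ i, a i * b 0 = a 0 * b i := fun i => Fin.induction rfl (fun i ih =>
    mul_right_cancel₀ (hb i.castSucc).ne' (by linear_combination b 0 * h i + b i.succ * ih)) i
  have hS : 0 < ∑ i, b i := sum_pos (fun i _ => hb i) univ_nonempty
  have h₀ : a 0 = b 0 := by
    have : (∑ i, a i) * b 0 = a 0 * ∑ i, b i := by
      rw [sum_mul, mul_sum]
      exact sum_congr rfl fun i _ => hprop i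
    rw [hsum, mul_comm] at this
    exact (mul_right_cancel₀ hS.ne' this).symm
  funext i
  exact mul_right_cancel₀ (hb 0).ne' (by rw [hprop i, h₀, mul_comm])

lemma add_mul_log_div_add_lt {a₀ a₁ b₀ b₁ : ℝ} (ha₀ : 0 < a₀) (ha₁ : 0 < a₁) (hb₀ : 0 < b₀)
    (hb₁ : 0 < b₁) (hne : a₀ * b₁ ≠ a₁ * b₀) :
    (a₀ + a₁) * log ((a₀ + a₁) / (b₀ + b₁)) < a₀ * log (a₀ / b₀) + a₁ * log (a₁ / b₁) := by
  have hb : 0 < b₀ + b₁ := by positivity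
  have hxy : a₀ / b₀ ≠ a₁ / b₁ := by
    rwa [Ne, div_eq_div_iff hb₀.ne' hb₁.ne']
  -- Jensen for `x log x` at the points `aᵢ / bᵢ` with weights `bᵢ / (b₀ + b₁)`
  have key := strictConvexOn_mul_log.2 (Set.mem_Ici.mpr (div_pos ha₀ hb₀).le)
    (Set.mem_Ici.mpr (div_pos ha₁ hb₁).le) hxy (div_pos hb₀ hb) (div_pos hb₁ hb)
    (by rw [← add_div, div_self hb.ne'])
  have hmean : b₀ / (b₀ + b₁) * (a₀ / b₀) + b₁ / (b₀ + b₁) * (a₁ / b₁)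
      = (a₀ + a₁) / (b₀ + b₁) := by
    field_simp
  simp only [smul_eq_mul, hmean] at key
  have := mul_lt_mul_of_pos_left key hb
  refine (Eq.trans_lt ?_ this).trans_eq ?_
  · field_simp
  · field_simp

lemma add_mul_log_div_add_le {a₀ a₁ b₀ b₁ : ℝ} (ha₀ : 0 < a₀) (ha₁ : 0 < a₁) (hb₀ : 0 < b₀)
    (hb₁ : 0 < b₁) :
    (a₀ + a₁) * log ((a₀ + a₁) / (b₀ + b₁)) ≤ a₀ * log (a₀ / b₀) + a₁ * log (a₁ / b₁) := by
  by_cases hne : a₀ * b₁ = a₁ * b₀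
  · have h₀ : a₁ / b₁ = a₀ / b₀ := by
      rw [div_eq_div_iff hb₁.ne' hb₀.ne']; linarith
    have h : (a₀ + a₁) / (b₀ + b₁) = a₀ / b₀ := by
      rw [div_eq_div_iff (by positivity) hb₀.ne']; linarith
    rw [h, h₀, add_mul]
  · exact (add_mul_log_div_add_lt ha₀ ha₁ hb₀ hb₁ hne).le

lemma negMulLog_le_tangent {a y : ℝ} (ha : 0 < a) (hy : 0 ≤ y) :
    negMulLog y ≤ negMulLog a + (-log a - 1) * (y - a) := by
  rcases hy.eq_or_lt with rfl | hy
  · simp only [negMulLog]; nlinarith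
  · have h := mul_le_mul_of_nonneg_left (log_le_sub_one_of_pos (div_pos ha hy)) hy.le
    rw [log_div ha.ne' hy.ne', mul_sub_one, mul_div_cancel₀ _ hy.ne'] at h
    simp only [negMulLog]
    linarith

lemma sum_negMulLog_lineMap_le {ι : Type*} (I : Finset ι) {a b : ι → ℝ} (ha : ∀ i, 0 ≤ a i)
    (hb : ∀ i, 0 ≤ b i) {ε : ℝ} (hε₀ : 0 ≤ ε) (hε₁ : ε ≤ 1) :
    ∑ i ∈ I, negMulLog ((1 - ε) * a i + ε * b i)
      ≤ ∑ i ∈ I, negMulLog (a i) + (∑ i ∈ I with a i = 0, b i) * negMulLog ε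
        + ε * (∑ i ∈ I with a i = 0, negMulLog (b i)
          + ∑ i ∈ I with a i ≠ 0, (-log (a i) - 1) * (b i - a i)) := by
  have hzero : ∑ i ∈ I with a i = 0, negMulLog ((1 - ε) * a i + ε * b i)
      = (∑ i ∈ I with a i = 0, b i) * negMulLog ε
        + ε * ∑ i ∈ I with a i = 0, negMulLog (b i) := by
    rw [sum_mul, mul_sum, ← sum_add_distrib]
    refine sum_congr rfl fun i hi => ?_
    rw [(mem_filter.1 hi).2, mul_zero, zero_add, negMulLog_mul]
  have hpos : ∑ i ∈ I with a i ≠ 0, negMulLog ((1 - ε) * a i + ε * b i)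
      ≤ ∑ i ∈ I with a i ≠ 0, negMulLog (a i)
        + ε * ∑ i ∈ I with a i ≠ 0, (-log (a i) - 1) * (b i - a i) := by
    rw [mul_sum, ← sum_add_distrib]
    refine sum_le_sum fun i hi => ?_
    have hai := (ha i).lt_of_ne' (mem_filter.1 hi).2
    have hy : 0 ≤ (1 - ε) * a i + ε * b i := by
      have := hb i; have := ha i; nlinarith
    exact (negMulLog_le_tangent hai hy).trans_eq (by ring)
  have hnegzero : ∑ i ∈ I with a i = 0, negMulLog (a i) = 0 :=
    sum_eq_zero fun i hi => by rw [(mem_filter.1 hi).2, negMulLog_zero]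
  rw [← sum_filter_add_sum_filter_not I (fun i => a i = 0),
    ← sum_filter_add_sum_filter_not I (fun i => a i = 0) (fun i => negMulLog (a i)), hzero,
    hnegzero]
  linarith

lemma negMulLog_add_le_sum_negMulLog_lineMap_single {ι : Type*} [Fintype ι] [DecidableEq ι]
    {θ : ι → ℝ} (hθ : IsPMF θ) {s : ι} (hs : θ s = 0) {ε : ℝ} (hε₀ : 0 ≤ ε) (hε₁ : ε ≤ 1) :
    negMulLog ε + (1 - ε) * ∑ i, negMulLog (θ i)
      ≤ ∑ i, negMulLog ((1 - ε) * θ i + ε * (Pi.single s 1 : ι → ℝ) i) := by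
  have hsplit : ∀ i, negMulLog ((1 - ε) * θ i + ε * (Pi.single s 1 : ι → ℝ) i)
      = θ i * negMulLog (1 - ε) + (1 - ε) * negMulLog (θ i)
        + negMulLog ((Pi.single s ε : ι → ℝ) i) := by
    intro i
    rw [← negMulLog_mul]
    by_cases h : i = s
    · subst h; simp [hs]
    · simp [h]
  have hsingle : ∑ i, negMulLog ((Pi.single s ε : ι → ℝ) i) = negMulLog ε := by
    rw [Fintype.sum_eq_single s fun i h => by simp [h], Pi.single_eq_same]
  simp only [hsplit, sum_add_distrib, ← sum_mul, ← mul_sum, hθ.2, one_mul, hsingle]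
  linarith [negMulLog_nonneg (sub_nonneg.2 hε₁) (sub_le_self 1 hε₀)]

section Entropy

variable {Ω α : Type*} [Fintype Ω] [DecidableEq α]

lemma ent_eq_sum_negMulLog_of_mem (p : Ω → ℝ) (Z : Ω → α) (I : Finset α) (hI : ∀ ω, Z ω ∈ I) :
    ent p Z = (∑ z ∈ I, negMulLog (pr p Z z)) / log 2 := by
  have hsub : univ.image Z ⊆ I := by
    rintro _ hz
    obtain ⟨ω, -, rfl⟩ := mem_image.mp hz
    exact hI ω
  have hzero : ∀ z ∈ I, z ∉ univ.image Z → negMulLog (pr p Z z) = 0 := by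
    intro z _ hz
    have : pr p Z z = 0 :=
      sum_eq_zero fun ω hω => absurd (mem_image.mpr ⟨ω, mem_univ ω, (mem_filter.mp hω).2⟩) hz
    rw [this, negMulLog_zero]
  rw [ent, ← sum_subset hsub hzero, sum_div, ← sum_neg_distrib]
  refine sum_congr rfl fun z _ => ?_
  rw [negMulLog, logb]
  ring

lemma pr_apply_of_injective (p : Ω → ℝ) {Z : Ω → α} (hZ : Function.Injective Z) (ω : Ω) :
    pr p Z (Z ω) = p ω := by
  have : univ.filter (fun ω' => Z ω' = Z ω) = {ω} := by
    ext ω'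
    simp [hZ.eq_iff]
  rw [pr, this, sum_singleton]

lemma ent_eq_sum_negMulLog_of_injective (p : Ω → ℝ) {Z : Ω → α} (hZ : Function.Injective Z) :
    ent p Z = (∑ ω, negMulLog (p ω)) / log 2 := by
  rw [ent_eq_sum_negMulLog_of_mem p Z (univ.image Z) fun ω => mem_image_of_mem Z (mem_univ ω),
    sum_image fun ω _ ω' _ h => hZ h]
  simp only [pr_apply_of_injective p hZ]

end Entropy

/-- `H(S - X) - H(S)` in nats. -/
noncomputable def miNats (mx ms : ℕ) (PX : Fin (mx + 1) → ℝ) (θ : Fin (ms + 1) → ℝ) : ℝ :=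
  ∑ w ∈ Icc (-(mx : ℤ)) ms, negMulLog (xiOf mx ms PX θ w) - ∑ s, negMulLog (θ s)

section ClosedForm

variable (PX : Fin (mx + 1) → ℝ) (θ : Fin (ms + 1) → ℝ)

lemma sub_mem_Icc (x : Fin (mx + 1)) (s : Fin (ms + 1)) :
    ((s : ℕ) : ℤ) - ((x : ℕ) : ℤ) ∈ Icc (-(mx : ℤ)) ms := by
  have := x.isLt; have := s.isLt
  rw [mem_Icc]; omega

lemma xiOf_eq_pr (w : ℤ) :
    xiOf mx ms PX θ w = pr (fun ω : Fin (mx + 1) × Fin (ms + 1) => PX ω.1 * θ ω.2)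
      (fun ω => ((ω.2 : ℕ) : ℤ) - ((ω.1 : ℕ) : ℤ)) w := by
  rw [pr, sum_filter, Fintype.sum_prod_type, xiOf]

lemma sum_mul_xiOf (g : ℤ → ℝ) :
    ∑ w ∈ Icc (-(mx : ℤ)) ms, g w * xiOf mx ms PX θ w
      = ∑ x, ∑ s, PX x * θ s * g (((s : ℕ) : ℤ) - ((x : ℕ) : ℤ)) := by
  simp only [xiOf, mul_sum, mul_ite, mul_zero]
  rw [sum_comm]
  refine sum_congr rfl fun x _ => ?_
  rw [sum_comm]
  refine sum_congr rfl fun s _ => ?_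
  rw [sum_ite_eq, if_pos (sub_mem_Icc x s), mul_comm]

lemma pr_fst (x : Fin (mx + 1)) :
    pr (fun ω : Fin (mx + 1) × Fin (ms + 1) => PX ω.1 * θ ω.2) (fun ω => ω.1) x
      = PX x * ∑ s, θ s := by
  rw [pr, sum_filter, Fintype.sum_prod_type, mul_sum]
  simp only [sum_ite_irrel, sum_const_zero, sum_ite_eq', mem_univ, if_true]

lemma sum_negMulLog_mul_eq (hPX : IsPMF PX) (hθ : IsPMF θ) :
    ∑ ω : Fin (mx + 1) × Fin (ms + 1), negMulLog (PX ω.1 * θ ω.2)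
      = ∑ x, negMulLog (PX x) + ∑ s, negMulLog (θ s) := by
  simp only [negMulLog_mul, Fintype.sum_prod_type, sum_add_distrib, ← sum_mul, ← mul_sum,
    hPX.2, hθ.2, one_mul]

lemma iidMI_eq_miNats_div_log_two (hPX : IsPMF PX) (hθ : IsPMF θ) :
    iidMI mx ms PX θ = miNats mx ms PX θ / log 2 := by
  have hW := ent_eq_sum_negMulLog_of_mem (fun ω : Fin (mx + 1) × Fin (ms + 1) => PX ω.1 * θ ω.2)
    (fun ω => ((ω.2 : ℕ) : ℤ) - ((ω.1 : ℕ) : ℤ)) _ fun ω => sub_mem_Icc ω.1 ω.2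
  have hX := ent_eq_sum_negMulLog_of_mem (fun ω : Fin (mx + 1) × Fin (ms + 1) => PX ω.1 * θ ω.2)
    (fun ω => ω.1) univ fun ω => mem_univ _
  have hWX := ent_eq_sum_negMulLog_of_injective
    (fun ω : Fin (mx + 1) × Fin (ms + 1) => PX ω.1 * θ ω.2)
    (Z := fun ω => (((ω.2 : ℕ) : ℤ) - ((ω.1 : ℕ) : ℤ), ω.1)) fun ω ω' h => by
      obtain ⟨hw, hx⟩ := Prod.mk.inj h
      rw [hx] at hw
      exact Prod.ext hx (Fin.ext (by omega))
  simp only [← xiOf_eq_pr, pr_fst, hθ.2, mul_one] at hW hX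
  rw [iidMI, mutInfo, hW, hX, hWX, sum_negMulLog_mul_eq PX θ hPX hθ, miNats]
  ring

end ClosedForm

section Xi

variable {PX : Fin (mx + 1) → ℝ} {θ : Fin (ms + 1) → ℝ}

lemma xiOf_nonneg (hPX : ∀ x, 0 ≤ PX x) (hθ : ∀ s, 0 ≤ θ s) (w : ℤ) :
    0 ≤ xiOf mx ms PX θ w :=
  sum_nonneg fun x _ => sum_nonneg fun s _ => by
    split_ifs
    exacts [mul_nonneg (hPX x) (hθ s), le_rfl]

lemma mul_le_xiOf (hPX : ∀ x, 0 ≤ PX x) (hθ : ∀ s, 0 ≤ θ s) (x : Fin (mx + 1))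
    (s : Fin (ms + 1)) : PX x * θ s ≤ xiOf mx ms PX θ (((s : ℕ) : ℤ) - ((x : ℕ) : ℤ)) := by
  have hterm : ∀ (x' : Fin (mx + 1)) (s' : Fin (ms + 1)),
      0 ≤ if ((s' : ℕ) : ℤ) - ((x' : ℕ) : ℤ) = ((s : ℕ) : ℤ) - ((x : ℕ) : ℤ)
        then PX x' * θ s' else 0 := fun x' s' => by
    split_ifs
    exacts [mul_nonneg (hPX x') (hθ s'), le_rfl]
  calc PX x * θ s
      = if ((s : ℕ) : ℤ) - ((x : ℕ) : ℤ) = ((s : ℕ) : ℤ) - ((x : ℕ) : ℤ)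
          then PX x * θ s else 0 := (if_pos rfl).symm
    _ ≤ _ := single_le_sum (fun s' _ => hterm x s') (mem_univ s)
    _ ≤ _ := single_le_sum (fun x' _ => sum_nonneg fun s' _ => hterm x' s') (mem_univ x)

lemma xiOf_pos (hPX : ∀ x, 0 < PX x) (hθ : ∀ s, 0 ≤ θ s) (x : Fin (mx + 1)) {s : Fin (ms + 1)}
    (hs : 0 < θ s) : 0 < xiOf mx ms PX θ (((s : ℕ) : ℤ) - ((x : ℕ) : ℤ)) :=
  (mul_pos (hPX x) hs).trans_le (mul_le_xiOf (fun x => (hPX x).le) hθ x s)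

lemma xiOf_add (θ₀ θ₁ : Fin (ms + 1) → ℝ) (a b : ℝ) (w : ℤ) :
    xiOf mx ms PX (fun s => a * θ₀ s + b * θ₁ s) w
      = a * xiOf mx ms PX θ₀ w + b * xiOf mx ms PX θ₁ w := by
  simp only [xiOf, mul_sum, ← sum_add_distrib]
  refine sum_congr rfl fun x _ => sum_congr rfl fun s _ => ?_
  split_ifs <;> ring

lemma sum_xiOf (hPX : IsPMF PX) (hθ : IsPMF θ) :
    ∑ w ∈ Icc (-(mx : ℤ)) ms, xiOf mx ms PX θ w = 1 := by
  simpa [sum_mul_xiOf, ← sum_mul, ← mul_sum, hPX.2, hθ.2] using sum_mul_xiOf PX θ 1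

lemma isPMF_comp_rev (hθ : IsPMF θ) : IsPMF fun s : Fin (ms + 1) => θ s.rev :=
  ⟨fun s => hθ.1 s.rev, (Fintype.sum_equiv Fin.revPerm _ θ fun _ => rfl).trans hθ.2⟩

lemma xiOf_comp_rev (hsym : ∀ x : Fin (mx + 1), PX x = PX x.rev) (θ : Fin (ms + 1) → ℝ) (w : ℤ) :
    xiOf mx ms PX (fun s => θ s.rev) w = xiOf mx ms PX θ ((ms : ℤ) - mx - w) := by
  refine Fintype.sum_equiv Fin.revPerm _ _ fun x => Fintype.sum_equiv Fin.revPerm _ _ fun s => ?_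
  have := x.isLt; have := s.isLt
  simp only [Fin.revPerm_apply, Fin.val_rev, ← hsym x]
  congr 1
  apply propext
  omega

lemma miNats_comp_rev (hsym : ∀ x : Fin (mx + 1), PX x = PX x.rev) (θ : Fin (ms + 1) → ℝ) :
    miNats mx ms PX (fun s => θ s.rev) = miNats mx ms PX θ := by
  simp only [miNats, xiOf_comp_rev hsym]
  congr 1
  · refine sum_nbij' (fun w => (ms : ℤ) - mx - w) (fun w => (ms : ℤ) - mx - w) ?_ ?_ ?_ ?_ ?_ <;>
      intros <;> simp_all only [mem_Icc] <;> omega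
  · exact Fintype.sum_equiv Fin.revPerm _ _ fun _ => rfl

end Xi

section Convexity

variable {PX : Fin (mx + 1) → ℝ}

/-- The summand `P(x, w) log (P(w | x) / P(w))` of `I(S - X; X)` at `w = s - x`, in nats. -/
noncomputable def miTerm (PX : Fin (mx + 1) → ℝ) (θ : Fin (ms + 1) → ℝ)
    (ω : Fin (mx + 1) × Fin (ms + 1)) : ℝ :=
  PX ω.1 * (θ ω.2 * log (θ ω.2 / xiOf mx ms PX θ (((ω.2 : ℕ) : ℤ) - ((ω.1 : ℕ) : ℤ))))

lemma miNats_eq_sum_miTerm (hPX : IsPMF PX) (hpos : ∀ x, 0 < PX x) {θ : Fin (ms + 1) → ℝ}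
    (hθ : ∀ s, 0 < θ s) :
    miNats mx ms PX θ = ∑ ω, miTerm PX θ ω := by
  have hξ : ∑ w ∈ Icc (-(mx : ℤ)) ms, negMulLog (xiOf mx ms PX θ w)
      = -∑ x, ∑ s, PX x * θ s * log (xiOf mx ms PX θ (((s : ℕ) : ℤ) - ((x : ℕ) : ℤ))) := by
    rw [← sum_mul_xiOf PX θ (fun w => log (xiOf mx ms PX θ w)), ← sum_neg_distrib]
    simp only [negMulLog, neg_mul, mul_comm]
  have hS : ∑ s, negMulLog (θ s) = -∑ x, ∑ s, PX x * θ s * log (θ s) := by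
    simp only [negMulLog, mul_assoc, ← mul_sum, ← sum_mul, hPX.2, one_mul, neg_mul,
      sum_neg_distrib]
  rw [miNats, hξ, hS, neg_sub_neg, ← sum_sub_distrib, Fintype.sum_prod_type]
  refine sum_congr rfl fun x _ => ?_
  rw [← sum_sub_distrib]
  refine sum_congr rfl fun s _ => ?_
  rw [miTerm, log_div (hθ s).ne' (xiOf_pos hpos (fun s => (hθ s).le) x (hθ s)).ne']
  ring

lemma two_mul_miTerm_midpoint (θ₀ θ₁ : Fin (ms + 1) → ℝ) (ω : Fin (mx + 1) × Fin (ms + 1)) :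
    2 * miTerm PX (fun s => 1 / 2 * θ₀ s + 1 / 2 * θ₁ s) ω
      = PX ω.1 * ((θ₀ ω.2 + θ₁ ω.2) * log ((θ₀ ω.2 + θ₁ ω.2) /
          (xiOf mx ms PX θ₀ (((ω.2 : ℕ) : ℤ) - ((ω.1 : ℕ) : ℤ))
            + xiOf mx ms PX θ₁ (((ω.2 : ℕ) : ℤ) - ((ω.1 : ℕ) : ℤ))))) := by
  rw [miTerm, xiOf_add, ← mul_add, ← mul_add, mul_div_mul_left _ _ (by norm_num)]
  ring

lemma mul_xiOf_eq_of_isMinOn (hPX : IsPMF PX) (hpos : ∀ x, 0 < PX x) {θ₀ θ₁ : Fin (ms + 1) → ℝ}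
    (hθ₀ : IsPMF θ₀) (hθ₁ : IsPMF θ₁) (h₀ : ∀ s, 0 < θ₀ s) (h₁ : ∀ s, 0 < θ₁ s)
    (hmin₀ : IsMinOn (miNats mx ms PX) {θ | IsPMF θ} θ₀)
    (hmin₁ : IsMinOn (miNats mx ms PX) {θ | IsPMF θ} θ₁) (x : Fin (mx + 1)) (s : Fin (ms + 1)) :
    θ₀ s * xiOf mx ms PX θ₁ (((s : ℕ) : ℤ) - ((x : ℕ) : ℤ))
      = θ₁ s * xiOf mx ms PX θ₀ (((s : ℕ) : ℤ) - ((x : ℕ) : ℤ)) := by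
  set θm : Fin (ms + 1) → ℝ := fun s => 1 / 2 * θ₀ s + 1 / 2 * θ₁ s
  have hm : IsPMF θm := ⟨fun s => by have := hθ₀.1 s; have := hθ₁.1 s; positivity, by
    simp only [θm, sum_add_distrib, ← mul_sum, hθ₀.2, hθ₁.2]; norm_num⟩
  have hmpos : ∀ s, 0 < θm s := fun s => by have := h₀ s; have := h₁ s; positivity
  have hξ : ∀ {θ : Fin (ms + 1) → ℝ}, (∀ s, 0 < θ s) → ∀ (ω : Fin (mx + 1) × Fin (ms + 1)),
      0 < xiOf mx ms PX θ (((ω.2 : ℕ) : ℤ) - ((ω.1 : ℕ) : ℤ)) :=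
    fun hθ ω => xiOf_pos hpos (fun s => (hθ s).le) ω.1 (hθ ω.2)
  have hle : ∀ ω, 2 * miTerm PX θm ω ≤ miTerm PX θ₀ ω + miTerm PX θ₁ ω := fun ω => by
    rw [two_mul_miTerm_midpoint, miTerm, miTerm, ← mul_add]
    exact mul_le_mul_of_nonneg_left
      (add_mul_log_div_add_le (h₀ _) (h₁ _) (hξ h₀ ω) (hξ h₁ ω)) (hpos _).le
  have hsum : ∑ ω, 2 * miTerm PX θm ω = ∑ ω, (miTerm PX θ₀ ω + miTerm PX θ₁ ω) := by
    refine le_antisymm (sum_le_sum fun ω _ => hle ω) ?_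
    rw [← mul_sum, sum_add_distrib, ← miNats_eq_sum_miTerm hPX hpos h₀,
      ← miNats_eq_sum_miTerm hPX hpos h₁, ← miNats_eq_sum_miTerm hPX hpos hmpos]
    linarith [isMinOn_iff.1 hmin₀ θm hm, isMinOn_iff.1 hmin₁ θm hm]
  have heq := (sum_eq_sum_iff_of_le fun ω _ => hle ω).1 hsum (x, s) (mem_univ _)
  by_contra hne
  refine heq.not_lt ?_
  rw [two_mul_miTerm_midpoint, miTerm, miTerm, ← mul_add]
  exact mul_lt_mul_of_pos_left
    (add_mul_log_div_add_lt (h₀ _) (h₁ _) (hξ h₀ (x, s)) (hξ h₁ (x, s)) hne) (hpos _)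

end Convexity

lemma exists_miNats_lt_of_eq_zero {PX : Fin (mx + 1) → ℝ} (hPX : IsPMF PX) (hpos : ∀ x, 0 < PX x)
    {θ : Fin (ms + 1) → ℝ} (hθ : IsPMF θ) {s : Fin (ms + 1)} (hs : θ s = 0) (x₀ : Fin (mx + 1))
    (hξ : 0 < xiOf mx ms PX θ (((s : ℕ) : ℤ) - ((x₀ : ℕ) : ℤ))) :
    ∃ θ', IsPMF θ' ∧ miNats mx ms PX θ' < miNats mx ms PX θ := by
  set δ : Fin (ms + 1) → ℝ := Pi.single s 1
  have hδ : IsPMF δ := ⟨fun t => by simp only [δ, Pi.single_apply]; split_ifs <;> norm_num,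
    by simp [δ]⟩
  set ξ := xiOf mx ms PX θ
  set ψ := xiOf mx ms PX δ
  set I := Icc (-(mx : ℤ)) ms
  have hPX₀ : ∀ x, 0 ≤ PX x := fun x => (hpos x).le
  set c := ∑ w ∈ I with ξ w = 0, ψ w
  set K := ∑ w ∈ I with ξ w = 0, negMulLog (ψ w)
    + ∑ w ∈ I with ξ w ≠ 0, (-log (ξ w) - 1) * (ψ w - ξ w) + ∑ t, negMulLog (θ t)
  have hc : c < 1 := by
    have hψ₀ : 0 < ψ (((s : ℕ) : ℤ) - ((x₀ : ℕ) : ℤ)) := xiOf_pos hpos hδ.1 x₀ (by simp [δ])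
    have hle := single_le_sum (fun w _ => xiOf_nonneg hPX₀ hδ.1 w)
      (mem_filter.2 ⟨sub_mem_Icc x₀ s, hξ.ne'⟩ : _ ∈ I.filter fun w => ξ w ≠ 0)
    have := sum_filter_add_sum_filter_not I (fun w => ξ w = 0) ψ
    rw [sum_xiOf hPX hδ] at this
    linarith
  -- `H(S)` grows by `ε log (1/ε)`, `H(S - X)` by only `c ε log (1/ε) + O(ε)`
  obtain ⟨ε, hε₀, hε₁, hεK⟩ : ∃ ε : ℝ, 0 < ε ∧ ε < 1 ∧ (1 - c) * log ε + K < 0 := by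
    have hc' : 0 < 1 - c := sub_pos.2 hc
    refine ⟨exp (-(|K| + 1) / (1 - c)), exp_pos _,
      exp_lt_one_iff.2 (div_neg_of_neg_of_pos (by linarith [abs_nonneg K]) hc'), ?_⟩
    rw [log_exp, mul_div_cancel₀ _ hc'.ne']
    linarith [le_abs_self K]
  refine ⟨fun t => (1 - ε) * θ t + ε * δ t, ⟨fun t => ?_, ?_⟩, ?_⟩
  · have := hθ.1 t; have := hδ.1 t; nlinarith
  · rw [sum_add_distrib, ← mul_sum, ← mul_sum, hθ.2, hδ.2]; ring
  have hS := negMulLog_add_le_sum_negMulLog_lineMap_single hθ hs hε₀.le hε₁.le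
  have hW := sum_negMulLog_lineMap_le I (xiOf_nonneg hPX₀ hθ.1) (xiOf_nonneg hPX₀ hδ.1)
    hε₀.le hε₁.le
  have hneg := mul_neg_of_pos_of_neg hε₀ hεK
  simp only [miNats, xiOf_add]
  rw [negMulLog] at hS hW
  linarith

lemma pos_of_isMinOn (hmx : 1 ≤ mx) {PX : Fin (mx + 1) → ℝ} (hPX : IsPMF PX)
    (hpos : ∀ x, 0 < PX x) {θ : Fin (ms + 1) → ℝ} (hθ : IsPMF θ)
    (hmin : IsMinOn (miNats mx ms PX) {θ | IsPMF θ} θ) (s : Fin (ms + 1)) : 0 < θ s := by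
  have hspread : ∀ {s t : Fin (ms + 1)} (x₀ x₁ : Fin (mx + 1)),
      ((s : ℕ) : ℤ) - ((x₀ : ℕ) : ℤ) = ((t : ℕ) : ℤ) - ((x₁ : ℕ) : ℤ) → θ s = 0 → θ t = 0 := by
    intro s t x₀ x₁ hst hs
    by_contra ht
    have hξ : 0 < xiOf mx ms PX θ (((s : ℕ) : ℤ) - ((x₀ : ℕ) : ℤ)) :=
      hst ▸ xiOf_pos hpos hθ.1 x₁ ((hθ.1 t).lt_of_ne' ht)
    obtain ⟨θ', hθ', hlt⟩ := exists_miNats_lt_of_eq_zero hPX hpos hθ hs x₀ hξ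
    exact hlt.not_ge (isMinOn_iff.1 hmin θ' hθ')
  have hstep : ∀ i : Fin ms, θ i.castSucc ≠ 0 ↔ θ i.succ ≠ 0 := fun i => by
    have h : (((i.castSucc : Fin (ms + 1)) : ℕ) : ℤ) - ((0 : Fin (mx + 1)) : ℕ)
        = ((i.succ : ℕ) : ℤ) - ((⟨1, by omega⟩ : Fin (mx + 1)) : ℕ) := by simp
    exact not_congr ⟨hspread _ _ h, hspread _ _ h.symm⟩
  obtain ⟨j, -, hj⟩ := exists_lt_of_sum_lt (s := univ) (f := 0) (g := θ) (by simp [hθ.2])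
  exact (hθ.1 s).lt_of_ne'
    (Fin.forall_of_castSucc_iff_succ (P := fun i => θ i ≠ 0) hstep hj.ne' s)

lemma eq_of_isMinOn (hmx : 1 ≤ mx) {PX : Fin (mx + 1) → ℝ} (hPX : IsPMF PX)
    (hpos : ∀ x, 0 < PX x) {θ₀ θ₁ : Fin (ms + 1) → ℝ} (hθ₀ : IsPMF θ₀) (hθ₁ : IsPMF θ₁)
    (hmin₀ : IsMinOn (miNats mx ms PX) {θ | IsPMF θ} θ₀)
    (hmin₁ : IsMinOn (miNats mx ms PX) {θ | IsPMF θ} θ₁) : θ₀ = θ₁ := by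
  have h₀ := pos_of_isMinOn hmx hPX hpos hθ₀ hmin₀
  have h₁ := pos_of_isMinOn hmx hPX hpos hθ₁ hmin₁
  have hcross := mul_xiOf_eq_of_isMinOn hPX hpos hθ₀ hθ₁ h₀ h₁ hmin₀ hmin₁
  -- `θ₁ / θ₀` at `s` equals `ξ₁ / ξ₀` at both `s - 0` and `(s + 1) - 1`, hence is constant
  refine Fin.eq_of_mul_succ_eq h₁ (fun i => ?_) (hθ₀.2.trans hθ₁.2.symm)
  have hw : ((i.succ : ℕ) : ℤ) - ((⟨1, by omega⟩ : Fin (mx + 1)) : ℕ)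
      = (((i.castSucc : Fin (ms + 1)) : ℕ) : ℤ) - ((0 : Fin (mx + 1)) : ℕ) := by simp
  have hc := hcross 0 i.castSucc
  have hs := hcross ⟨1, by omega⟩ i.succ
  rw [hw] at hs
  exact mul_right_cancel₀ (xiOf_pos hpos hθ₁.1 0 (h₁ i.castSucc)).ne'
    (by linear_combination θ₁ i.castSucc * hs - θ₁ i.succ * hc)

/-- If the fully supported pmf `P_X` on `𝒳` is symmetric,
`P_X(x) = P_X(m_x - x)`, then any minimizer `θ*` of `θ ↦ I(S - X; X)` over pmfs on `𝒮`
is symmetric: `θ*(s) = θ*(m_s - s)` for all `s ∈ 𝒮`. -/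
theorem minimizer_symmetric (mx ms : ℕ) (hmx : 1 ≤ mx)
    (PX : Fin (mx + 1) → ℝ) (hPX : IsPMF PX) (hpos : ∀ x, 0 < PX x)
    (hsym : ∀ x : Fin (mx + 1), PX x = PX x.rev)
    (θs : Fin (ms + 1) → ℝ) (hθs : IsPMF θs)
    (hmin : ∀ θ : Fin (ms + 1) → ℝ, IsPMF θ → iidMI mx ms PX θs ≤ iidMI mx ms PX θ) :
    ∀ s : Fin (ms + 1), θs s = θs s.rev := by
  have hminNats : IsMinOn (miNats mx ms PX) {θ | IsPMF θ} θs := isMinOn_iff.2 fun θ hθ => by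
    have := hmin θ hθ
    rwa [iidMI_eq_miNats_div_log_two PX θs hPX hθs, iidMI_eq_miNats_div_log_two PX θ hPX hθ,
      div_le_div_iff_of_pos_right (log_pos one_lt_two)] at this
  have hminRev : IsMinOn (miNats mx ms PX) {θ | IsPMF θ} fun s => θs s.rev :=
    isMinOn_iff.2 fun θ hθ => (miNats_comp_rev hsym θs).trans_le (isMinOn_iff.1 hminNats θ hθ)
  exact congrFun (eq_of_isMinOn hmx hPX hpos hθs (isPMF_comp_rev hθs) hminNats hminRev)

end SmartMeter
end
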